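/- arXiv:1201.5074 — 3 statements merged into one kernel-verified Lean document; each statement's English description precedes it below -/
import Mathlib

section
/- Let E be an m-dimensional linear subspace of ℝ^n (n = m + k), let v_1,…,v_m ∈ E, and let L ≤ 1 be a positive constant. If |v_j − (e_j, 0)| ≤ L/(3√m) for all j ∈ {1,…,m}, where (e_j,0) denotes the j-th standard basis vector of ℝ^m × {0} ⊂ ℝ^m × ℝ^k, then E is a graph over ℝ^m × {0}: there exists a matrix A = (a_1,…,a_m) ∈ ℝ^{k×m} such that E = span{(e_1,a_1),…,(e_m,a_m)}. -/
/-! The projections of the `v_j` to `ℝ^m` lie within `L/(3√m)` of the standard basis vectors,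
hence within Hilbert–Schmidt distance `L/3 < 1` of the standard basis, and by Cauchy–Schwarz such a
family is still a basis. So the projection maps `E` onto `ℝ^m`; lifting each `e_j` to some
`(e_j, a_j) ∈ E` gives `m` independent vectors, which span `E` because `dim E = m`. -/

/-- The Euclidean (L²) product space ℝ^m × ℝ^k. -/
noncomputable abbrev ProdSp (m k : ℕ) :=
  WithLp 2 (EuclideanSpace ℝ (Fin m) × EuclideanSpace ℝ (Fin k))

/-- The point (x, a) ∈ ℝ^m × ℝ^k. -/
noncomputable def mk2 {m k : ℕ} (x : EuclideanSpace ℝ (Fin m)) (a : EuclideanSpace ℝ (Fin k)) :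
    ProdSp m k := (WithLp.equiv 2 _).symm (x, a)

lemma norm_sum_smul_le_mul_sqrt_sum_sq {ι F : Type*} [Fintype ι] [SeminormedAddCommGroup F]
    [NormedSpace ℝ F] (c : EuclideanSpace ℝ ι) (u : ι → F) :
    ‖∑ i, c i • u i‖ ≤ ‖c‖ * √(∑ i, ‖u i‖ ^ 2) :=
  calc ‖∑ i, c i • u i‖ ≤ ∑ i, ‖c i‖ * ‖u i‖ := (norm_sum_le _ _).trans_eq (by simp [norm_smul])
    _ ≤ ‖c‖ * √(∑ i, ‖u i‖ ^ 2) := by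
      rw [EuclideanSpace.norm_eq]
      exact Real.sum_mul_le_sqrt_mul_sqrt _ _ _

lemma OrthonormalBasis.linearIndependent_of_sum_norm_sub_sq_lt_one {ι F : Type*} [Fintype ι]
    [NormedAddCommGroup F] [InnerProductSpace ℝ F] (b : OrthonormalBasis ι ℝ F) (w : ι → F)
    (h : ∑ i, ‖w i - b i‖ ^ 2 < 1) : LinearIndependent ℝ w := by
  rw [Fintype.linearIndependent_iff]
  intro g hg
  set c : EuclideanSpace ℝ ι := WithLp.toLp 2 g
  have hc : b.repr.symm c = ∑ i, g i • (b i - w i) := by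
    simp [← b.sum_repr_symm, c, smul_sub, Finset.sum_sub_distrib, hg]
  have hle : ‖c‖ ≤ ‖c‖ * √(∑ i, ‖b i - w i‖ ^ 2) :=
    calc ‖c‖ = ‖b.repr.symm c‖ := (b.repr.symm.norm_map c).symm
      _ ≤ _ := hc ▸ norm_sum_smul_le_mul_sqrt_sum_sq c _
  have hlt : √(∑ i, ‖b i - w i‖ ^ 2) < 1 := by
    rw [Real.sqrt_lt' one_pos]; simpa [norm_sub_rev] using h
  have hc0 : c = 0 := norm_eq_zero.mp
    (le_antisymm (by nlinarith [norm_nonneg c]) (norm_nonneg c))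
  exact fun i => congrArg (fun x : EuclideanSpace ℝ ι => x i) hc0

lemma eq_span_graph_of_map_fst_eq_top {m k : ℕ} (E : Submodule ℝ (ProdSp m k))
    (hE : Module.finrank ℝ E ≤ m) (hfst : E.map (WithLp.fstₗ 2 ℝ _ _) = ⊤) :
    ∃ a : Fin m → EuclideanSpace ℝ (Fin k),
      E = Submodule.span ℝ (Set.range fun j => mk2 (EuclideanSpace.single j 1) (a j)) := by
  have hlift : ∀ j : Fin m, ∃ u ∈ E, u.fst = EuclideanSpace.single j 1 := fun j => by
    simpa using hfst.ge (Submodule.mem_top (x := EuclideanSpace.single j 1))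
  choose u huE hu using hlift
  refine ⟨fun j => (u j).snd, ?_⟩
  have hmk : (fun j => mk2 (EuclideanSpace.single j 1) (u j).snd) = u :=
    funext fun j => by rw [← hu j]; rfl
  have hli : LinearIndependent ℝ u := by
    refine LinearIndependent.of_comp (WithLp.fstₗ 2 ℝ _ _) ?_
    have hfst_u : WithLp.fstₗ 2 ℝ _ _ ∘ u = EuclideanSpace.basisFun (Fin m) ℝ :=
      funext fun j => by simp [hu]
    exact hfst_u ▸ (EuclideanSpace.basisFun (Fin m) ℝ).orthonormal.linearIndependent
  rw [hmk]
  refine (Submodule.eq_of_le_of_finrank_le ?_ ?_).symm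
  · exact Submodule.span_le.mpr (Set.range_subset_iff.mpr huE)
  · rw [finrank_span_eq_card hli, Fintype.card_fin]
    exact hE

/-- If an m-dimensional subspace E of ℝ^m × ℝ^k contains points v_j with
|v_j − (e_j, 0)| ≤ L/(3√m) for a positive constant L ≤ 1, then E is a graph over
ℝ^m × {0}: E = span{(e_1,a_1),…,(e_m,a_m)} for some a_j ∈ ℝ^k. -/
theorem stmt0 {m k : ℕ} (E : Submodule ℝ (ProdSp m k))
    (hE : Module.finrank ℝ E = m)
    (v : Fin m → ProdSp m k) (hv : ∀ j, v j ∈ E)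
    (L : ℝ) (hL0 : 0 < L) (hL1 : L ≤ 1)
    (hclose : ∀ j, ‖v j - mk2 (EuclideanSpace.single j 1) 0‖ ≤ L / (3 * Real.sqrt m)) :
    ∃ a : Fin m → EuclideanSpace ℝ (Fin k),
      E = Submodule.span ℝ (Set.range fun j => mk2 (EuclideanSpace.single j 1) (a j)) := by
  set P := WithLp.fstₗ 2 ℝ (EuclideanSpace ℝ (Fin m)) (EuclideanSpace ℝ (Fin k))
  set e := EuclideanSpace.basisFun (Fin m) ℝ
  have hPv : ∀ j, ‖P (v j) - e j‖ ≤ L / (3 * √m) := fun j =>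
    calc ‖P (v j) - e j‖ = ‖(v j - mk2 (EuclideanSpace.single j 1) 0).fst‖ := by simp [P, e, mk2]
      _ ≤ _ := (WithLp.norm_fst_le _ _).trans (hclose j)
  have hsum : ∑ j, ‖P (v j) - e j‖ ^ 2 < 1 :=
    calc ∑ j, ‖P (v j) - e j‖ ^ 2 ≤ m * (L / (3 * √m)) ^ 2 := by
          have hterm j : ‖P (v j) - e j‖ ^ 2 ≤ (L / (3 * √m)) ^ 2 :=
            pow_le_pow_left₀ (norm_nonneg _) (hPv j) 2
          simpa using Finset.sum_le_sum fun j (_ : j ∈ Finset.univ) => hterm j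
      _ ≤ L ^ 2 / 9 := by
          rcases eq_or_ne m 0 with rfl | hm
          · simp only [Nat.cast_zero, zero_mul]; positivity
          · rw [div_pow, mul_pow, Real.sq_sqrt (Nat.cast_nonneg m)]
            field_simp
            norm_num
      _ < 1 := by nlinarith
  have hspan : Submodule.span ℝ (Set.range (P ∘ v)) = ⊤ :=
    (e.linearIndependent_of_sum_norm_sub_sq_lt_one _ hsum).span_eq_top_of_card_eq_finrank'
      (by simp)
  refine eq_span_graph_of_map_fst_eq_top E hE.le (top_unique ?_)
  rw [← hspan, Submodule.span_le]
  rintro _ ⟨j, rfl⟩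
  exact Submodule.mem_map_of_mem (hv j)
end

section
/- Let E be an m-dimensional linear subspace of ℝ^n (n = m + k), let v_1,…,v_m ∈ E, and let 0 < L ≤ 1. If |v_j − (e_j, 0)| ≤ L/(3√m) for all j, then E = span{(e_1,a_1),…,(e_m,a_m)} for some a_1,…,a_m ∈ ℝ^k, and moreover (Σ_{j=1}^m |a_j|²)^{1/2} ≤ L. -/
/-!
Write `v j = (x j, y j)` and let `X`, `Y` be the matrices with rows `x j`, `y j`. The hypothesis
bounds the Frobenius norms of `1 - X` and `Y` by `L / 3`, so `X` is invertible (Neumann series),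
and the rows of `X⁻¹` combine the `v j` into the vectors `(e j, a j) ∈ E`, where the `a j` are the
rows of `A = X⁻¹ Y`. These are `m` independent vectors of the `m`-dimensional space `E`, hence
span it, and `A = Y + (1 - X) A` gives `‖A‖ ≤ (L / 3) / (1 - L / 3) ≤ L / 2`.
-/

open WithLp Module

lemma Matrix.sum_smul_toLp_row {ι ι' n 𝕜 : Type*} [Fintype ι] [Ring 𝕜] (C : Matrix ι' ι 𝕜)
    (M : Matrix ι n 𝕜) (j : ι') :
    ∑ p, C j p • toLp 2 (M p) = toLp 2 ((C * M) j) := by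
  ext i
  simp [Matrix.mul_apply]

section Frobenius

attribute [local instance] Matrix.frobeniusNormedAddCommGroup Matrix.frobeniusNormedSpace
  Matrix.frobeniusNormedRing

namespace Matrix

variable {m n 𝕜 : Type*} [Fintype m] [Fintype n] [RCLike 𝕜]

lemma frobenius_norm_eq_sqrt_sum_row (A : Matrix m n 𝕜) :
    ‖A‖ = √(∑ i, ‖toLp 2 (A i)‖ ^ 2) :=
  PiLp.norm_eq_of_L2 (toLp 2 fun i => toLp 2 (A i))

lemma frobenius_norm_le_of_row_le (A : Matrix m n 𝕜) {c : ℝ}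
    (h : ∀ i, ‖toLp 2 (A i)‖ ≤ c) : ‖A‖ ≤ √(Fintype.card m) * c := by
  rcases isEmpty_or_nonempty m with hm | ⟨⟨i⟩⟩
  · simp [Subsingleton.elim A 0]
  have hc : 0 ≤ c := (norm_nonneg _).trans (h i)
  rw [← Real.sqrt_sq hc, ← Real.sqrt_mul (by positivity), frobenius_norm_eq_sqrt_sum_row]
  gcongr
  calc ∑ i, ‖toLp 2 (A i)‖ ^ 2 ≤ ∑ _i : m, c ^ 2 := by gcongr with i; exact h i
    _ = _ := by simp

lemma one_sub_frobenius_norm_mul_le [DecidableEq m] (X : Matrix m m 𝕜) (A : Matrix m n 𝕜) :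
    (1 - ‖1 - X‖) * ‖A‖ ≤ ‖X * A‖ := by
  have : ‖A‖ ≤ ‖X * A‖ + ‖1 - X‖ * ‖A‖ :=
    calc ‖A‖ = ‖X * A + (1 - X) * A‖ := by rw [Matrix.sub_mul, Matrix.one_mul, add_sub_cancel]
      _ ≤ ‖X * A‖ + ‖(1 - X) * A‖ := norm_add_le _ _
      _ ≤ ‖X * A‖ + ‖1 - X‖ * ‖A‖ := by gcongr; exact frobenius_norm_mul _ _
  linarith

lemma isUnit_of_frobenius_norm_one_sub_lt_one [DecidableEq m] {X : Matrix m m 𝕜}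
    (h : ‖1 - X‖ < 1) : IsUnit X := by
  have : CompleteSpace (Matrix m m 𝕜) := FiniteDimensional.complete 𝕜 _
  simpa using (Units.oneSub (1 - X) h).isUnit

end Matrix

namespace ProdSp

variable {m k : ℕ}

lemma linearIndependent_mk2_single (a : Fin m → EuclideanSpace ℝ (Fin k)) :
    LinearIndependent ℝ fun j => mk2 (EuclideanSpace.single j (1 : ℝ)) (a j) :=
  LinearIndependent.of_comp (fstₗ 2 ℝ _ _) EuclideanSpace.orthonormal_single.linearIndependent

lemma eq_span_mk2_single {E : Submodule ℝ (ProdSp m k)} (hE : finrank ℝ E = m)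
    {a : Fin m → EuclideanSpace ℝ (Fin k)}
    (ha : ∀ j, mk2 (EuclideanSpace.single j 1) (a j) ∈ E) :
    E = Submodule.span ℝ (Set.range fun j => mk2 (EuclideanSpace.single j 1) (a j)) := by
  refine (Submodule.eq_of_le_of_finrank_eq (Submodule.span_le.2 ?_) ?_).symm
  · rintro _ ⟨j, rfl⟩
    exact ha j
  · rw [finrank_span_eq_card (linearIndependent_mk2_single a), Fintype.card_fin, hE]

def fstMatrix (v : Fin m → ProdSp m k) : Matrix (Fin m) (Fin m) ℝ :=
  Matrix.of fun j => ofLp (v j).fst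

def sndMatrix (v : Fin m → ProdSp m k) : Matrix (Fin m) (Fin k) ℝ :=
  Matrix.of fun j => ofLp (v j).snd

lemma mk2_single_mem_span (v : Fin m → ProdSp m k) (hX : IsUnit (fstMatrix v)) (j : Fin m) :
    mk2 (EuclideanSpace.single j 1) (toLp 2 (((fstMatrix v)⁻¹ * sndMatrix v) j)) ∈
      Submodule.span ℝ (Set.range v) := by
  set C := (fstMatrix v)⁻¹
  have hcomb : mk2 (EuclideanSpace.single j 1) (toLp 2 ((C * sndMatrix v) j)) =
      ∑ p, C j p • v p := by
    refine ofLp_injective 2 (Prod.ext ?_ ?_)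
    · change EuclideanSpace.single j 1 = fstₗ 2 ℝ _ _ (∑ p, C j p • v p)
      rw [map_sum]
      change _ = ∑ p, C j p • toLp 2 (fstMatrix v p)
      rw [Matrix.sum_smul_toLp_row,
        Matrix.nonsing_inv_mul _ ((Matrix.isUnit_iff_isUnit_det _).1 hX)]
      ext i
      simp [Matrix.one_apply, eq_comm]
    · change toLp 2 ((C * sndMatrix v) j) = sndₗ 2 ℝ _ _ (∑ p, C j p • v p)
      rw [map_sum]
      exact (Matrix.sum_smul_toLp_row C (sndMatrix v) j).symm
  rw [hcomb]
  exact Submodule.sum_mem _ fun p _ => Submodule.smul_mem _ _ (Submodule.subset_span ⟨p, rfl⟩)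

variable {v : Fin m → ProdSp m k} {ε : ℝ}

lemma norm_one_sub_fstMatrix_le (h : ∀ j, ‖v j - mk2 (EuclideanSpace.single j 1) 0‖ ≤ ε) :
    ‖1 - fstMatrix v‖ ≤ √m * ε := by
  simpa using Matrix.frobenius_norm_le_of_row_le _ fun j => calc
    ‖toLp 2 ((1 - fstMatrix v) j)‖ = ‖(v j - mk2 (EuclideanSpace.single j 1) 0).fst‖ := by
      rw [← norm_neg]
      congr 1
      ext i
      simp [fstMatrix, mk2, Matrix.one_apply, eq_comm]
    _ ≤ ε := (norm_fst_le _ _).trans (h j)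

lemma norm_sndMatrix_le (h : ∀ j, ‖v j - mk2 (EuclideanSpace.single j 1) 0‖ ≤ ε) :
    ‖sndMatrix v‖ ≤ √m * ε := by
  simpa using Matrix.frobenius_norm_le_of_row_le _ fun j => calc
    ‖toLp 2 (sndMatrix v j)‖ = ‖(v j - mk2 (EuclideanSpace.single j 1) 0).snd‖ := by
      congr 1
      ext i
      simp [sndMatrix, mk2]
    _ ≤ ε := (norm_snd_le _ _).trans (h j)

lemma exists_mk2_single_mem_span (h : ∀ j, ‖v j - mk2 (EuclideanSpace.single j 1) 0‖ ≤ ε)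
    (hε : √m * ε < 1) :
    ∃ a : Fin m → EuclideanSpace ℝ (Fin k),
      (∀ j, mk2 (EuclideanSpace.single j 1) (a j) ∈ Submodule.span ℝ (Set.range v)) ∧
      (1 - √m * ε) * √(∑ j, ‖a j‖ ^ 2) ≤ √m * ε := by
  have hX := norm_one_sub_fstMatrix_le h
  have hunit := Matrix.isUnit_of_frobenius_norm_one_sub_lt_one (hX.trans_lt hε)
  refine ⟨fun j => toLp 2 (((fstMatrix v)⁻¹ * sndMatrix v) j), mk2_single_mem_span v hunit, ?_⟩
  rw [← Matrix.frobenius_norm_eq_sqrt_sum_row]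
  calc (1 - √m * ε) * ‖(fstMatrix v)⁻¹ * sndMatrix v‖
      ≤ (1 - ‖1 - fstMatrix v‖) * ‖(fstMatrix v)⁻¹ * sndMatrix v‖ := by gcongr
    _ ≤ ‖fstMatrix v * ((fstMatrix v)⁻¹ * sndMatrix v)‖ :=
      Matrix.one_sub_frobenius_norm_mul_le _ _
    _ = ‖sndMatrix v‖ := by
      rw [Matrix.mul_nonsing_inv_cancel_left _ _ ((Matrix.isUnit_iff_isUnit_det _).1 hunit)]
    _ ≤ √m * ε := norm_sndMatrix_le h

end ProdSp

end Frobenius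

/-- Lemma 3.1: if an m-dimensional subspace E of ℝ^m × ℝ^k contains points v_j with
|v_j − (e_j, 0)| ≤ L/(3√m), 0 < L ≤ 1, then E = span{(e_1,a_1),…,(e_m,a_m)} with
(Σ_j |a_j|²)^{1/2} ≤ L. -/
theorem stmt1 {m k : ℕ} (E : Submodule ℝ (ProdSp m k))
    (hE : Module.finrank ℝ E = m)
    (v : Fin m → ProdSp m k) (hv : ∀ j, v j ∈ E)
    (L : ℝ) (hL0 : 0 < L) (hL1 : L ≤ 1)
    (hclose : ∀ j, ‖v j - mk2 (EuclideanSpace.single j 1) 0‖ ≤ L / (3 * Real.sqrt m)) :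
    ∃ a : Fin m → EuclideanSpace ℝ (Fin k),
      E = Submodule.span ℝ (Set.range fun j => mk2 (EuclideanSpace.single j 1) (a j)) ∧
      Real.sqrt (∑ j, ‖a j‖ ^ 2) ≤ L := by
  have hδ : √m * (L / (3 * √m)) ≤ L / 3 := by
    rcases eq_or_ne (√m) 0 with h0 | h0
    · -- `m = 0`, where the division by `3 * √m` gives `0`
      rw [h0, zero_mul]
      positivity
    · rw [mul_div_left_comm, div_mul_cancel_right₀ h0]
      simp [div_eq_mul_inv]
  obtain ⟨a, ha, hnorm⟩ := ProdSp.exists_mk2_single_mem_span hclose (by linarith)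
  have hspan : Submodule.span ℝ (Set.range v) ≤ E := Submodule.span_le.2 (Set.range_subset_iff.2 hv)
  refine ⟨a, ProdSp.eq_span_mk2_single hE fun j => hspan (ha j), ?_⟩
  have : 0 ≤ √m * (L / (3 * √m)) := by positivity
  nlinarith [Real.sqrt_nonneg (∑ j, ‖a j‖ ^ 2)]
end

section
/- Let G ⊂ ℝ^m be a one-dimensional subspace. Then there exists an index ν ∈ {1,…,m} and a sign choice such that the orthogonal projection e_ν^⊥ of the standard basis vector e_ν onto the orthogonal complement G^⊥ satisfies |e_ν^⊥ − e_ν| ≥ 1/√m. Consequently, |w − e_ν| ≥ 1/√m for all w ∈ G^⊥. -/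
/-!
Take a nonzero `g ∈ G` and a coordinate `ν` at which `|g ν|` is maximal, so that
`‖g‖ ≤ √m |g ν|`. For `w ∈ Gᗮ` we have `g ν = ⟪e_ν, g⟫ = ⟪e_ν - w, g⟫`, hence by Cauchy–Schwarz
`|g ν| ≤ ‖g‖ ‖w - e_ν‖`, and together `1 / √m ≤ ‖w - e_ν‖`.
-/

open scoped InnerProductSpace

variable {𝕜 E ι : Type*} [RCLike 𝕜] [NormedAddCommGroup E] [InnerProductSpace 𝕜 E]

theorem OrthonormalBasis.exists_norm_le_sqrt_card_mul_norm_inner [Fintype ι] [Nonempty ι]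
    (b : OrthonormalBasis ι 𝕜 E) (x : E) :
    ∃ i, ‖x‖ ≤ √(Fintype.card ι) * ‖⟪b i, x⟫_𝕜‖ := by
  obtain ⟨i, hi⟩ := exists_eq_ciSup_of_finite (f := fun i ↦ ‖⟪b i, x⟫_𝕜‖)
  exact ⟨i, hi ▸ b.norm_le_card_mul_iSup_norm_inner x⟩

theorem Submodule.norm_inner_le_norm_mul_norm_sub_of_mem_orthogonal {K : Submodule 𝕜 E}
    {g w : E} (hg : g ∈ K) (hw : w ∈ Kᗮ) (v : E) :
    ‖⟪v, g⟫_𝕜‖ ≤ ‖w - v‖ * ‖g‖ := by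
  have : ⟪v, g⟫_𝕜 = -⟪w - v, g⟫_𝕜 := by
    rw [inner_sub_left, K.inner_left_of_mem_orthogonal hg hw, zero_sub, neg_neg]
  rw [this, norm_neg]
  exact norm_inner_le_norm _ _

theorem Submodule.exists_one_div_sqrt_card_le_norm_sub_of_mem_orthogonal [Fintype ι]
    {K : Submodule 𝕜 E} (hK : K ≠ ⊥) (b : OrthonormalBasis ι 𝕜 E) :
    ∃ i, ∀ w ∈ Kᗮ, 1 / √(Fintype.card ι) ≤ ‖w - b i‖ := by
  obtain ⟨g, hgK, hg⟩ := K.exists_mem_ne_zero_of_ne_bot hK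
  have : Nontrivial E := nontrivial_of_ne g 0 hg
  have : Nonempty ι := b.toBasis.index_nonempty
  obtain ⟨i, hi⟩ := b.exists_norm_le_sqrt_card_mul_norm_inner g
  refine ⟨i, fun w hw ↦ ?_⟩
  have hsqrt : 0 < √(Fintype.card ι : ℝ) := by positivity
  have : 1 * ‖g‖ ≤ (√(Fintype.card ι) * ‖w - b i‖) * ‖g‖ := by
    rw [one_mul, mul_assoc]
    exact hi.trans (by gcongr; exact K.norm_inner_le_norm_mul_norm_sub_of_mem_orthogonal hgK hw _)
  rw [div_le_iff₀' hsqrt]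
  exact le_of_mul_le_mul_right this (norm_pos_iff.mpr hg)

/-- If G ⊂ ℝ^m is a one-dimensional subspace, then there is an index ν such that the
orthogonal projection of e_ν onto G^⊥ is at distance ≥ 1/√m from e_ν; consequently
|w − e_ν| ≥ 1/√m for all w ∈ G^⊥. -/
theorem stmt3 {m : ℕ} (G : Submodule ℝ (EuclideanSpace ℝ (Fin m)))
    (hG : Module.finrank ℝ G = 1) :
    ∃ ν : Fin m,
      1 / Real.sqrt m ≤
        ‖(Submodule.orthogonalProjectionOnto Gᗮ (EuclideanSpace.single ν 1) :
            EuclideanSpace ℝ (Fin m)) - EuclideanSpace.single ν 1‖ ∧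
      ∀ w ∈ Gᗮ, 1 / Real.sqrt m ≤ ‖w - EuclideanSpace.single ν 1‖ := by
  obtain ⟨ν, hν⟩ := Submodule.exists_one_div_sqrt_card_le_norm_sub_of_mem_orthogonal
    (Submodule.one_le_finrank_iff.mp hG.ge) (EuclideanSpace.basisFun (Fin m) ℝ)
  simp only [Fintype.card_fin, EuclideanSpace.basisFun_apply] at hν
  exact ⟨ν, hν _ (Submodule.coe_mem _), hν⟩
end
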